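/- Let m > 0 and let T be the 2×2 complex matrix with rows (0, m) and (0, 1). Then the numerical range of T is exactly the union of circles W(T) = ⋃_{t ∈ [0,1]} { z ∈ ℂ : |z − (1 − t²)| = m·t·√(1 − t²) }. -/

import Mathlib

/-!
For a unit vector `x = (a, b)` one computes `⟨T x, x⟩ = m·āb + |b|²`. Putting `t = |a|`, so that
`|b|² = 1 - t²`, the point `⟨T x, x⟩` lies on the circle of centre `1 - t²` and radius
`m·t·√(1 - t²)`; conversely, taking `a = t` and rotating the phase of `b` sweeps out that whole
circle.
-/

/-- The numerical range of an `n × n` complex matrix `A`: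
`W(A) = {⟨A x, x⟩ : x ∈ ℂⁿ, ‖x‖ = 1}`. -/
noncomputable def numRange {n : ℕ} (A : Matrix (Fin n) (Fin n) ℂ) : Set ℂ :=
  {z : ℂ | ∃ x : EuclideanSpace ℂ (Fin n), ‖x‖ = 1 ∧
    z = (inner ℂ x (Matrix.toEuclideanLin A x) : ℂ)}

open Complex ComplexConjugate

lemma EuclideanSpace.norm_eq_one_iff_fin_two (x : EuclideanSpace ℂ (Fin 2)) :
    ‖x‖ = 1 ↔ ‖x 0‖ ^ 2 + ‖x 1‖ ^ 2 = 1 := by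
  rw [← pow_eq_one_iff_of_nonneg (norm_nonneg x) two_ne_zero, EuclideanSpace.norm_sq_eq,
    Fin.sum_univ_two]

lemma inner_toEuclideanLin_zero_c_zero_one (c : ℂ) (x : EuclideanSpace ℂ (Fin 2)) :
    inner ℂ x (Matrix.toEuclideanLin !![0, c; 0, 1] x) = c * conj (x 0) * x 1 + ‖x 1‖ ^ 2 := by
  simp only [Matrix.toLpLin_apply, PiLp.inner_apply, Fin.sum_univ_two, Matrix.mulVec,
    dotProduct, RCLike.inner_apply, Matrix.of_apply, Matrix.cons_val', Matrix.cons_val_zero,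
    Matrix.cons_val_one, Matrix.empty_val', Matrix.cons_val_fin_one]
  rw [← mul_conj']
  ring

lemma mem_numRange_zero_c_zero_one_iff (c z : ℂ) :
    z ∈ numRange !![0, c; 0, 1] ↔
      ∃ a b : ℂ, ‖a‖ ^ 2 + ‖b‖ ^ 2 = 1 ∧ z = c * conj a * b + ‖b‖ ^ 2 := by
  constructor
  · rintro ⟨x, hx, rfl⟩
    exact ⟨x 0, x 1, (EuclideanSpace.norm_eq_one_iff_fin_two x).1 hx,
      inner_toEuclideanLin_zero_c_zero_one c x⟩
  · rintro ⟨a, b, hab, rfl⟩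
    refine ⟨!₂[a, b], (EuclideanSpace.norm_eq_one_iff_fin_two _).2 (by simpa using hab), ?_⟩
    rw [inner_toEuclideanLin_zero_c_zero_one]
    simp

lemma exists_norm_sub_eq_of_mem_numRange {c z : ℂ} (hz : z ∈ numRange !![0, c; 0, 1]) :
    ∃ t ∈ Set.Icc (0 : ℝ) 1,
      ‖z - ((1 - t ^ 2 : ℝ) : ℂ)‖ = ‖c‖ * t * Real.sqrt (1 - t ^ 2) := by
  obtain ⟨a, b, hab, rfl⟩ := (mem_numRange_zero_c_zero_one_iff c z).1 hz
  have hb : 1 - ‖a‖ ^ 2 = ‖b‖ ^ 2 := by linarith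
  refine ⟨‖a‖, ⟨norm_nonneg a, by nlinarith [norm_nonneg b]⟩, ?_⟩
  rw [hb, Real.sqrt_sq (norm_nonneg b)]
  push_cast
  simp

lemma mem_numRange_of_norm_sub_eq (m : ℝ) {t : ℝ} (ht0 : 0 ≤ t) (ht1 : t ≤ 1) {z : ℂ}
    (hz : ‖z - ((1 - t ^ 2 : ℝ) : ℂ)‖ = m * t * Real.sqrt (1 - t ^ 2)) :
    z ∈ numRange !![0, (m : ℂ); 0, 1] := by
  set s := Real.sqrt (1 - t ^ 2)
  have hs : s ^ 2 = 1 - t ^ 2 := Real.sq_sqrt (by nlinarith)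
  set w := z - ((1 - t ^ 2 : ℝ) : ℂ)
  have hb : ‖(s : ℂ) * exp (arg w * I)‖ = s := by
    rw [norm_mul, norm_exp_ofReal_mul_I, mul_one, Complex.norm_of_nonneg (Real.sqrt_nonneg _)]
  refine (mem_numRange_zero_c_zero_one_iff _ z).2
    ⟨t, s * exp (arg w * I), by simp [abs_of_nonneg ht0, hs], ?_⟩
  calc z = ‖w‖ * exp (arg w * I) + ((1 - t ^ 2 : ℝ) : ℂ) := by
        rw [norm_mul_exp_arg_mul_I, sub_add_cancel]
    _ = m * conj (t : ℂ) * (s * exp (arg w * I)) + ‖(s : ℂ) * exp (arg w * I)‖ ^ 2 := by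
        rw [hz, hb, ← hs, conj_ofReal]
        push_cast
        ring

/-- For `m > 0` and `T = [[0, m], [0, 1]]`, the numerical range `W(T)` is exactly the union
over `t ∈ [0,1]` of the circles centered at `1 - t²` of radius `m·t·√(1 - t²)`. -/
theorem numRange_as_union_of_circles (m : ℝ) (hm : 0 < m) :
    numRange !![(0 : ℂ), (m : ℂ); 0, 1] =
      ⋃ t ∈ Set.Icc (0 : ℝ) 1,
        {z : ℂ | ‖z - ((1 - t ^ 2 : ℝ) : ℂ)‖ = m * t * Real.sqrt (1 - t ^ 2)} := by
  ext z
  simp only [Set.mem_iUnion, Set.mem_ofPred_eq, exists_prop]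
  constructor
  · intro hz
    simpa [abs_of_pos hm] using exists_norm_sub_eq_of_mem_numRange hz
  · rintro ⟨t, ⟨ht0, ht1⟩, hz⟩
    exact mem_numRange_of_norm_sub_eq m ht0 ht1 hz
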